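/- In a category with finite products, any update structure whose Get has a trivial outcome, whose magma is the second projection π₂, and whose comagma is the diagonal δ_V, arises from a very-well-behaved lens: defining g := π₂ ∘ Get, one has Get = ⟨id_S, g⟩ and (S, V, g, Put) satisfies the vwb lens laws. -/

import Mathlib

open CategoryTheory CategoryTheory.Limits

namespace CategoryTheory.Limits

variable {C : Type*} [Category C]

theorem prod.eq_lift_id_of_comp_fst_eq_id {X Y : C} [HasBinaryProduct X Y] {f : X ⟶ X ⨯ Y}
    (h : f ≫ prod.fst = 𝟙 X) : f = prod.lift (𝟙 X) (f ≫ prod.snd) := by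
  apply prod.hom_ext
  · rw [h, prod.lift_fst]
  · rw [prod.lift_snd]

variable [HasBinaryProducts C]

theorem prod.associator_hom_comp_map_id_snd (X Y Z : C) :
    (prod.associator X Y Z).hom ≫ prod.map (𝟙 X) prod.snd = prod.map prod.fst (𝟙 Z) := by
  ext <;> simp [prod.associator, prod.lift_fst, prod.lift_snd]

theorem prod.map_id_diag_comp_associator_inv_comp_snd (X Y : C) :
    prod.map (𝟙 X) (diag Y) ≫ (prod.associator X Y Y).inv ≫ prod.snd = prod.snd := by
  simp [prod.associator, prod.lift_snd]

end CategoryTheory.Limits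

theorem update_structure_is_vwb_lens_general {C : Type*} [Category C] [HasFiniteProducts C]
    (S V : C) (put : S ⨯ V ⟶ S) (get : S ⟶ S ⨯ V)
    -- PutPut with magma π₂
    (hPutPut : prod.map put (𝟙 V) ≫ put
      = (prod.associator S V V).hom ≫ prod.map (𝟙 S) prod.snd ≫ put)
    -- PutGet
    (hPutGet : put ≫ get
      = prod.map (𝟙 S) (diag V) ≫ (prod.associator S V V).inv ≫ prod.map put (𝟙 V))
    -- GetPut
    (hGetPut : get ≫ put = 𝟙 S)
    -- trivial outcome: discarding the property output of Get yields the identity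
    (hTrivialOutcome : get ≫ prod.fst = 𝟙 S) :
    -- Get is determined by g := π₂ ∘ Get
    (get = prod.lift (𝟙 S) (get ≫ prod.snd)) ∧
    -- lens PutPut
    (prod.map put (𝟙 V) ≫ put = prod.map prod.fst (𝟙 V) ≫ put) ∧
    -- lens PutGet
    (put ≫ (get ≫ prod.snd) = prod.snd) ∧
    -- lens GetPut
    (prod.lift (𝟙 S) (get ≫ prod.snd) ≫ put = 𝟙 S) := by
  have hget := prod.eq_lift_id_of_comp_fst_eq_id hTrivialOutcome
  refine ⟨hget, ?_, ?_, ?_⟩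
  · rw [hPutPut, ← prod.associator_hom_comp_map_id_snd, Category.assoc]
  · calc put ≫ get ≫ prod.snd
        = prod.map (𝟙 S) (diag V) ≫ (prod.associator S V V).inv ≫ prod.snd := by
          rw [← Category.assoc, hPutGet]
          simp only [Category.assoc, prod.map_snd, Category.comp_id]
      _ = prod.snd := prod.map_id_diag_comp_associator_inv_comp_snd S V
  · rw [← hget, hGetPut]

/-- An update structure with magma π₂, comagma the diagonal, and trivial outcome
arises from a very-well-behaved lens via g := π₂ ∘ Get. -/
theorem update_structure_is_vwb_lens {C : Type*} [Category C] [HasFiniteProducts C]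
    (S V : C) (put : S ⨯ V ⟶ S) (get : S ⟶ S ⨯ V)
    -- PutPut with magma π₂
    (hPutPut : prod.map put (𝟙 V) ≫ put
      = (prod.associator S V V).hom ≫ prod.map (𝟙 S) prod.snd ≫ put)
    -- GetGet with comagma the diagonal
    (hGetGet : get ≫ prod.map get (𝟙 V)
      = get ≫ prod.map (𝟙 S) (diag V) ≫ (prod.associator S V V).inv)
    -- PutGet
    (hPutGet : put ≫ get
      = prod.map (𝟙 S) (diag V) ≫ (prod.associator S V V).inv ≫ prod.map put (𝟙 V))
    -- GetPut
    (hGetPut : get ≫ put = 𝟙 S)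
    -- trivial outcome: discarding the property output of Get yields the identity
    (hTrivialOutcome : get ≫ prod.fst = 𝟙 S) :
    -- Get is determined by g := π₂ ∘ Get
    (get = prod.lift (𝟙 S) (get ≫ prod.snd)) ∧
    -- lens PutPut
    (prod.map put (𝟙 V) ≫ put = prod.map prod.fst (𝟙 V) ≫ put) ∧
    -- lens PutGet
    (put ≫ (get ≫ prod.snd) = prod.snd) ∧
    -- lens GetPut
    (prod.lift (𝟙 S) (get ≫ prod.snd) ≫ put = 𝟙 S) :=
  update_structure_is_vwb_lens_general S V put get hPutPut hPutGet hGetPut hTrivialOutcome
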